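/- The coproduct Δ_• defines a right pre-Lie coalgebra structure on Tub: for every basis element (Γ,T), one has ((Id ⊗ Δ_• − Δ_• ⊗ Id) ∘ Δ_•)(Γ,T) = ((τ ⊗ Id) ∘ (Id ⊗ Δ_• − Δ_• ⊗ Id) ∘ Δ_•)(Γ,T), where τ is the twisting map τ(x ⊗ y) = y ⊗ x. Equivalently, (Id ⊗ Δ_• − Δ_• ⊗ Id)(Δ_•(Γ,T)) equals the sum over all ordered pairs (t₁,t₂) of disjoint tubes of T of (Γ_{t₁},T|_{t₁}) ⊗ (Γ_{t₂},T|_{t₂}) ⊗ (Γ_{{t₁,t₂}}^*, T_{{t₁,t₂}}^*), which is symmetric in its first two tensor factors. -/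

import Mathlib

open scoped Classical
open TensorProduct

noncomputable section

/-- A finite simple graph whose vertices are a finite set of (totally ordered) naturals. -/
structure FinGraph : Type where
  verts : Finset ℕ
  Adj : ℕ → ℕ → Prop
  symm : ∀ v w, Adj v w → Adj w v
  loopless : ∀ v, ¬ Adj v v
  support : ∀ v w, Adj v w → v ∈ verts ∧ w ∈ verts

namespace CDTub

/-- Connectivity of a vertex set within a graph: any two of its vertices are joined by a
walk staying inside the set. -/
def VConn (G : FinGraph) (s : Finset ℕ) : Prop :=
  ∀ v ∈ s, ∀ w ∈ s, Relation.ReflTransGen (fun a b => a ∈ s ∧ b ∈ s ∧ G.Adj a b) v w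

/-- A tube: a nonempty set of vertices inducing a connected subgraph. -/
def IsTube (G : FinGraph) (t : Finset ℕ) : Prop :=
  t.Nonempty ∧ t ⊆ G.verts ∧ VConn G t

/-- A connected (nonempty) graph: the universal tube is a tube. -/
def IsConnGraph (G : FinGraph) : Prop := IsTube G G.verts

/-- Two vertex sets are far apart: disjoint and with no edge between them. -/
def FarApart (G : FinGraph) (a b : Finset ℕ) : Prop :=
  Disjoint a b ∧ ¬ ∃ v ∈ a, ∃ w ∈ b, G.Adj v w

/-- Compatible tubes: nested or far apart. -/
def Compatible (G : FinGraph) (a b : Finset ℕ) : Prop :=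
  a ⊆ b ∨ b ⊆ a ∨ FarApart G a b

/-- Linked tubes: disjoint and joined by an edge. -/
def Linked (G : FinGraph) (a b : Finset ℕ) : Prop :=
  Disjoint a b ∧ ∃ v ∈ a, ∃ w ∈ b, G.Adj v w

/-- A tubing of a connected graph: pairwise compatible tubes containing the universal tube. -/
def IsTubing (G : FinGraph) (T : Finset (Finset ℕ)) : Prop :=
  G.verts ∈ T ∧ (∀ t ∈ T, IsTube G t) ∧
    ∀ t ∈ T, ∀ t' ∈ T, t ≠ t' → Compatible G t t'

/-- Induced subgraph on a set of vertices. -/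
def induce (G : FinGraph) (t : Finset ℕ) : FinGraph where
  verts := t
  Adj v w := v ∈ t ∧ w ∈ t ∧ G.Adj v w
  symm := fun v w h => ⟨h.2.1, h.1, G.symm v w h.2.2⟩
  loopless := fun v h => G.loopless v h.2.2
  support := fun _ _ h => ⟨h.1, h.2.1⟩

/-- Simultaneous reconnected complement with respect to a family `F` of tubes
(for a single tube, or a family of pairwise far apart tubes, this is the (iterated)
reconnected complement). -/
def reconnAll (G : FinGraph) (F : Finset (Finset ℕ)) : FinGraph where
  verts := G.verts \ F.biUnion id
  Adj v w := v ≠ w ∧ v ∈ G.verts \ F.biUnion id ∧ w ∈ G.verts \ F.biUnion id ∧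
    (G.Adj v w ∨ ∃ f ∈ F, (∃ u ∈ f, G.Adj v u) ∧ ∃ u' ∈ f, G.Adj w u')
  symm := by
    rintro v w ⟨hne, hv, hw, h⟩
    refine ⟨hne.symm, hw, hv, ?_⟩
    rcases h with h | ⟨f, hf, h1, h2⟩
    · exact Or.inl (G.symm _ _ h)
    · exact Or.inr ⟨f, hf, h2, h1⟩
  loopless := fun v h => h.1 rfl
  support := fun _ _ h => ⟨h.2.1, h.2.2.1⟩

/-- Reconnected complement `Γ_t^*` of a graph with respect to a tube. -/
def reconn (G : FinGraph) (t : Finset ℕ) : FinGraph := reconnAll G {t}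

/-- The proper tubes of a tubing. -/
def properTubes (G : FinGraph) (T : Finset (Finset ℕ)) : Finset (Finset ℕ) :=
  T.filter (fun s => s ≠ G.verts)

/-- The maximal proper tubes of a tubing. -/
def MaxtP (G : FinGraph) (T : Finset (Finset ℕ)) : Finset (Finset ℕ) :=
  (properTubes G T).filter (fun s => ∀ s' ∈ properTubes G T, s ⊆ s' → s = s')

/-- The iterated reconnected complement `Γ_T^*` with respect to the maximal proper tubes. -/
def gammaStar (G : FinGraph) (T : Finset (Finset ℕ)) : FinGraph :=
  reconnAll G (MaxtP G T)

/-- Restriction `T|_t` of a tubing to a tube. -/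
def restrictT (T : Finset (Finset ℕ)) (t : Finset ℕ) : Finset (Finset ℕ) :=
  T.filter (fun s => s ⊆ t)

/-- For a tube `s` of `Γ_T^*`, the tube `s̃` of `Γ`: the union of `s` with all maximal
proper tubes of `T` linked to `s`. -/
def tildeT (G : FinGraph) (T : Finset (Finset ℕ)) (s : Finset ℕ) : Finset ℕ :=
  s ∪ ((MaxtP G T).filter (fun m => Linked G m s)).biUnion id

/-- Substitution `T •_Γ S` of a tubing `S` of `Γ_T^*` into the tubing `T`. -/
def substT (G : FinGraph) (T S : Finset (Finset ℕ)) : Finset (Finset ℕ) :=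
  T ∪ S.image (tildeT G T)

/-- The `t`-substitution `γ_t(T;S) = T ∪ (T|_t •_{Γ_t} S)`. -/
def gammaSub (G : FinGraph) (T : Finset (Finset ℕ)) (t : Finset ℕ)
    (S : Finset (Finset ℕ)) : Finset (Finset ℕ) :=
  T ∪ substT (induce G t) (restrictT T t) S

/-- The tubing `T_t^*` induced on the reconnected complement `Γ_t^*`. -/
def indStar (T : Finset (Finset ℕ)) (t : Finset ℕ) : Finset (Finset ℕ) :=
  T.filter (fun s => Disjoint s t) ∪ (T.filter (fun s => t ⊂ s)).image (fun s => s \ t)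

/-- The operation `T ◇ S` of Definition 2.4(2). -/
def diamond (G : FinGraph) (T : Finset (Finset ℕ)) (t : Finset ℕ)
    (S : Finset (Finset ℕ)) : Finset (Finset ℕ) :=
  T ∪ S.filter (fun s => ¬ Linked G s t) ∪
    (S.filter (fun s => Linked G s t)).image (fun s => s ∪ t)

/-- The tubes of `T`, viewed as subsets of the subtype of vertices. -/
def tubeSets (G : FinGraph) (T : Finset (Finset ℕ)) : Set (Set {x // x ∈ G.verts}) :=
  {U | ∃ t ∈ T, U = {x : {x // x ∈ G.verts} | (x : ℕ) ∈ t}}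

/-- The topology on the vertex set generated by the tubes of `T`. -/
def tubingTop (G : FinGraph) (T : Finset (Finset ℕ)) :
    TopologicalSpace {x // x ∈ G.verts} :=
  TopologicalSpace.generateFrom (tubeSets G T)

/-- One-line notation of the permutation `σ_t`: the vertices of `t` in increasing order
followed by the remaining vertices in increasing order. -/
def sigmaList (X t : Finset ℕ) : List ℕ :=
  t.sort (· ≤ ·) ++ (X \ t).sort (· ≤ ·)

/-- Number of `Γ`-inversions of a permutation given by its one-line notation `l`:
pairs of positions `p < q` carrying values `a > b` which form an edge of `Γ`. -/
def invCount (G : FinGraph) (l : List ℕ) : ℕ :=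
  ((Finset.range l.length ×ˢ Finset.range l.length).filter
    (fun pq => pq.1 < pq.2 ∧ l.getD pq.2 0 < l.getD pq.1 0 ∧
      G.Adj (l.getD pq.1 0) (l.getD pq.2 0))).card

/-- The signature `sgn^Γ(σ) = (-1)^{inv_Γ(σ)}`. -/
def graphSgn (G : FinGraph) (l : List ℕ) : ℤ := (-1) ^ invCount G l

/-- Rank (1-based) of `v` inside a finite set `X` of naturals: the order-preserving
relabelling of `X` by `{1,…,|X|}`. -/
def rk (X : Finset ℕ) (v : ℕ) : ℕ := (X.filter (fun u => u ≤ v)).card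

/-- Order-preserving relabelling of a graph by the initial segment `{1,…,n}`. -/
def relabelG (G : FinGraph) : FinGraph where
  verts := G.verts.image (rk G.verts)
  Adj i j := i ≠ j ∧ ∃ v w, G.Adj v w ∧ i = rk G.verts v ∧ j = rk G.verts w
  symm := by
    rintro i j ⟨hne, v, w, h, hi, hj⟩
    exact ⟨hne.symm, w, v, G.symm _ _ h, hj, hi⟩
  loopless := fun _ h => h.1 rfl
  support := by
    rintro i j ⟨hne, v, w, h, hi, hj⟩
    exact ⟨Finset.mem_image.mpr ⟨v, (G.support _ _ h).1, hi.symm⟩,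
      Finset.mem_image.mpr ⟨w, (G.support _ _ h).2, hj.symm⟩⟩

/-- Order-preserving relabelling of a subset of `X`. -/
def relabelF (X t : Finset ℕ) : Finset ℕ := t.image (rk X)

/-- Order-preserving relabelling of a family of subsets of `X`. -/
def relabelT (X : Finset ℕ) (T : Finset (Finset ℕ)) : Finset (Finset ℕ) :=
  T.image (relabelF X)

/-- Connected components (in `G`) of a set of vertices. -/
def comps (G : FinGraph) (s : Finset ℕ) : Finset (Finset ℕ) :=
  s.image (fun v => s.filter (fun w =>
    Relation.ReflTransGen (fun a b => a ∈ s ∧ b ∈ s ∧ G.Adj a b) v w))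

/-- The restriction map `res_Ω^Γ` on tubings: replace each tube by its connected
components in `Ω`. -/
def resT (Om : FinGraph) (T : Finset (Finset ℕ)) : Finset (Finset ℕ) :=
  T.biUnion (comps Om)

/-- Shift of a vertex set by `n`. -/
def shiftF (n : ℕ) (s : Finset ℕ) : Finset ℕ := s.image (fun v => v + n)

/-- Shift of a family of vertex sets by `n`. -/
def shiftT (n : ℕ) (S : Finset (Finset ℕ)) : Finset (Finset ℕ) := S.image (shiftF n)

/-- Shift of a graph by `n`. -/
def shiftG (n : ℕ) (G : FinGraph) : FinGraph where
  verts := shiftF n G.verts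
  Adj v w := ∃ a b, G.Adj a b ∧ v = a + n ∧ w = b + n
  symm := by
    rintro v w ⟨a, b, h, rfl, rfl⟩
    exact ⟨b, a, G.symm _ _ h, rfl, rfl⟩
  loopless := by
    rintro v ⟨a, b, h, ha, hb⟩
    have : a = b := by omega
    exact G.loopless b (this ▸ h)
  support := by
    rintro v w ⟨a, b, h, rfl, rfl⟩
    exact ⟨Finset.mem_image.mpr ⟨a, (G.support _ _ h).1, rfl⟩,
      Finset.mem_image.mpr ⟨b, (G.support _ _ h).2, rfl⟩⟩

/-- `X_T` : the vertices belonging to no proper tube of `T`. -/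
def freeVerts (G : FinGraph) (T : Finset (Finset ℕ)) : Finset ℕ :=
  G.verts.filter (fun v => ∀ s ∈ T, s ≠ G.verts → v ∉ s)

/-- The endpoint `max X_T` of the joining edge. -/
def joinA (G : FinGraph) (T : Finset (Finset ℕ)) : ℕ :=
  WithBot.unbotD 0 (freeVerts G T).max

/-- The endpoint `n + min X_S` of the joining edge. -/
def joinB (Om : FinGraph) (S : Finset (Finset ℕ)) (n : ℕ) : ℕ :=
  n + WithTop.untopD 0 (freeVerts Om S).min

/-- Vertex set of the joined graph `Γ ∪_{T,S} Ω`. -/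
def joinVerts (G Om : FinGraph) (n : ℕ) : Finset ℕ := G.verts ∪ shiftF n Om.verts

/-- The joined graph `Γ ∪_{T,S} Ω`: the disjoint union (with `Ω` shifted by `n`)
plus one edge from `max X_T` to `n + min X_S`. -/
def joinG (G Om : FinGraph) (T S : Finset (Finset ℕ)) (n : ℕ) : FinGraph where
  verts := joinVerts G Om n
  Adj v w := G.Adj v w ∨ (shiftG n Om).Adj v w ∨
    (v ≠ w ∧ v ∈ joinVerts G Om n ∧ w ∈ joinVerts G Om n ∧
      ((v = joinA G T ∧ w = joinB Om S n) ∨ (w = joinA G T ∧ v = joinB Om S n)))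
  symm := by
    rintro v w (h | h | ⟨hne, hv, hw, hc⟩)
    · exact Or.inl (G.symm _ _ h)
    · exact Or.inr (Or.inl ((shiftG n Om).symm _ _ h))
    · exact Or.inr (Or.inr ⟨hne.symm, hw, hv, hc.symm⟩)
  loopless := by
    rintro v (h | h | ⟨hne, _⟩)
    · exact G.loopless v h
    · exact (shiftG n Om).loopless v h
    · exact hne rfl
  support := by
    rintro v w (h | h | ⟨_, hv, hw, _⟩)
    · exact ⟨Finset.mem_union_left _ (G.support _ _ h).1,
        Finset.mem_union_left _ (G.support _ _ h).2⟩
    · exact ⟨Finset.mem_union_right _ ((shiftG n Om).support _ _ h).1,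
        Finset.mem_union_right _ ((shiftG n Om).support _ _ h).2⟩
    · exact ⟨hv, hw⟩

/-- `T ▷ S`. -/
def trR (G Om : FinGraph) (T S : Finset (Finset ℕ)) (n : ℕ) : Finset (Finset ℕ) :=
  T ∪ shiftT n (properTubes Om S) ∪ {joinVerts G Om n}

/-- `T ◁ S`. -/
def trL (G Om : FinGraph) (T S : Finset (Finset ℕ)) (n : ℕ) : Finset (Finset ℕ) :=
  properTubes G T ∪ shiftT n S ∪ {joinVerts G Om n}

/-- `T ⊥ S`. -/
def tPerp (G Om : FinGraph) (T S : Finset (Finset ℕ)) (n : ℕ) : Finset (Finset ℕ) :=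
  properTubes G T ∪ shiftT n (properTubes Om S) ∪ {joinVerts G Om n}

/-- Equality of graphs: same vertex set and same edges. -/
def GEq (A B : FinGraph) : Prop :=
  A.verts = B.verts ∧ ∀ v w, A.Adj v w ↔ B.Adj v w

/-- Index type for the basis of `Tub⁺`: `none` is the unit `1`, `some (Γ,T)` is a pair. -/
abbrev TubIdx : Type := Option (FinGraph × Finset (Finset ℕ))

/-- A pair `(Γ,T)` relabelled order-preservingly to standard vertex set, identified
with the unit `1` when the vertex set is empty. -/
def embPair (G : FinGraph) (T : Finset (Finset ℕ)) : TubIdx :=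
  if G.verts = ∅ then none else some (relabelG G, relabelT G.verts T)

/-- The value of the pre-Lie coproduct `Δ_•` on a basis element. -/
def deltaFun (K : Type) [CommRing K] (i : TubIdx) :
    (TubIdx →₀ K) ⊗[K] (TubIdx →₀ K) :=
  match i with
  | none => Finsupp.single (none : TubIdx) (1 : K) ⊗ₜ[K] Finsupp.single (none : TubIdx) (1 : K)
  | some (G, T) =>
      (∑ t ∈ T, (Finsupp.single (embPair (induce G t) (restrictT T t)) (1 : K)) ⊗ₜ[K]
        (Finsupp.single (embPair (reconn G t) (indStar T t)) (1 : K)))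
      + (Finsupp.single (none : TubIdx) (1 : K)) ⊗ₜ[K]
          (Finsupp.single (some (G, T) : TubIdx) (1 : K))

/-- The pre-Lie coproduct `Δ_•` on `Tub⁺`, the free module on `TubIdx`. -/
def delta (K : Type) [CommRing K] :
    (TubIdx →₀ K) →ₗ[K] (TubIdx →₀ K) ⊗[K] (TubIdx →₀ K) :=
  Finsupp.lift ((TubIdx →₀ K) ⊗[K] (TubIdx →₀ K)) K TubIdx (deltaFun K)

end CDTub

/-!
Expanding `Δ_•` twice, `(Id ⊗ Δ_•) Δ_• (Γ,T)` consists of `1 ⊗ Δ_•(Γ,T)`, a term for each ordered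
pair `σ, t` of disjoint tubes and a term for each nested pair `t ⊆ ρ`, while
`(Δ_• ⊗ Id) Δ_• (Γ,T)` consists of `1 ⊗ Δ_•(Γ,T)` and the terms of the nested pairs. These agree
because `(Γ_t^*)|_{ρ∖t} = (Γ_ρ)_t^*` and `(Γ_t^*)_{ρ∖t}^* = Γ_ρ^*` (the latter since `ρ` is
connected), with the corresponding identities for the tubings. Disjoint tubes of a tubing are far
apart, and reconnected complements along far apart tubes commute, so what remains is symmetric in
the first two factors. As `Δ_•` commutes with order-preserving relabelling, everything can be
computed on unrelabelled pairs.
-/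

theorem FinGraph.ext {A B : FinGraph} (hv : A.verts = B.verts)
    (ha : ∀ v w, A.Adj v w ↔ B.Adj v w) : A = B := by
  cases A; cases B
  simp only [FinGraph.mk.injEq]
  exact ⟨hv, funext fun v => funext fun w => propext (ha v w)⟩

namespace CDTub

theorem rk_strictMonoOn (X : Finset ℕ) : StrictMonoOn (rk X) X := by
  intro v _ w hw hvw
  refine Finset.card_lt_card ⟨Finset.monotone_filter_right _ fun u _ hu => hu.trans hvw.le, ?_⟩
  intro hsub
  have := (Finset.mem_filter.mp (hsub (Finset.mem_filter.mpr ⟨hw, le_rfl⟩))).2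
  omega

theorem rk_image {X : Finset ℕ} {f : ℕ → ℕ} (hf : StrictMonoOn f X) {v : ℕ} (hv : v ∈ X) :
    rk (X.image f) (f v) = rk X v := by
  unfold rk
  rw [Finset.filter_image]
  refine Finset.card_image_of_injOn (hf.injOn.mono ?_) |>.trans (congrArg _ ?_)
  · exact fun u hu => (Finset.mem_filter.mp hu).1
  · exact Finset.filter_congr fun u hu => hf.le_iff_le hu hv

section InjOn

theorem disjoint_image_iff_of_injOn {α β : Type*} [DecidableEq α] [DecidableEq β] {f : α → β}
    {V s t : Finset α} (hf : Set.InjOn f V) (hs : s ⊆ V) (ht : t ⊆ V) :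
    Disjoint (s.image f) (t.image f) ↔ Disjoint s t := by
  have hst : Set.InjOn f (↑s ∪ ↑t) := hf.mono (by simpa using And.intro hs ht)
  rw [Finset.disjoint_iff_inter_eq_empty, Finset.disjoint_iff_inter_eq_empty,
    ← Finset.image_inter_of_injOn _ _ hst, Finset.image_eq_empty]

theorem image_ssubset_image_iff_of_injOn {α β : Type*} [DecidableEq β] {f : α → β}
    {V s t : Finset α} (hf : Set.InjOn f V) (hs : s ⊆ V) (ht : t ⊆ V) :
    s.image f ⊂ t.image f ↔ s ⊂ t := by
  rw [Finset.ssubset_def, Finset.ssubset_def, Finset.image_subset_image_iff_of_injOn hf hs ht,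
    Finset.image_subset_image_iff_of_injOn hf ht hs]

variable {f : ℕ → ℕ} {V t : Finset ℕ}

theorem restrictT_image {T : Finset (Finset ℕ)} (hf : Set.InjOn f V) (hT : ∀ s ∈ T, s ⊆ V)
    (ht : t ⊆ V) :
    restrictT (T.image (Finset.image f)) (t.image f) = (restrictT T t).image (Finset.image f) := by
  rw [restrictT, restrictT, Finset.filter_image]
  exact congrArg _ (Finset.filter_congr fun s hs =>
    Finset.image_subset_image_iff_of_injOn hf (hT s hs) ht)

theorem indStar_image {T : Finset (Finset ℕ)} (hf : Set.InjOn f V) (hT : ∀ s ∈ T, s ⊆ V)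
    (ht : t ⊆ V) :
    indStar (T.image (Finset.image f)) (t.image f) = (indStar T t).image (Finset.image f) := by
  rw [indStar, indStar, Finset.image_union, Finset.filter_image, Finset.filter_image,
    Finset.image_image, Finset.image_image]
  congr 1
  · exact congrArg _ (Finset.filter_congr fun s hs => disjoint_image_iff_of_injOn hf (hT s hs) ht)
  · rw [Finset.filter_congr fun s hs => image_ssubset_image_iff_of_injOn hf ht (hT s hs)]
    refine Finset.image_congr fun s hs => ?_
    have hs' := Finset.mem_filter.mp hs
    exact (Finset.image_sdiff_of_injOn (hf.mono (hT s hs'.1)) hs'.2.le).symm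

end InjOn

theorem reconn_verts (G : FinGraph) (t : Finset ℕ) : (reconn G t).verts = G.verts \ t := by
  simp [reconn, reconnAll]

theorem reconn_adj (G : FinGraph) (t : Finset ℕ) (v w : ℕ) :
    (reconn G t).Adj v w ↔ v ≠ w ∧ v ∈ G.verts \ t ∧ w ∈ G.verts \ t ∧
      (G.Adj v w ∨ ((∃ u ∈ t, G.Adj v u) ∧ ∃ u ∈ t, G.Adj w u)) := by
  simp [reconn, reconnAll]

theorem mem_restrictT {T : Finset (Finset ℕ)} {t x : Finset ℕ} :
    x ∈ restrictT T t ↔ x ∈ T ∧ x ⊆ t :=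
  Finset.mem_filter

theorem mem_indStar {T : Finset (Finset ℕ)} {t x : Finset ℕ} :
    x ∈ indStar T t ↔ (x ∈ T ∧ Disjoint x t) ∨ ∃ s ∈ T, t ⊂ s ∧ s \ t = x := by
  simp only [indStar, Finset.mem_union, Finset.mem_filter, Finset.mem_image]
  tauto

theorem subset_sdiff_of_mem_indStar {V t x : Finset ℕ} {T : Finset (Finset ℕ)}
    (hT : ∀ s ∈ T, s ⊆ V) (hx : x ∈ indStar T t) : x ⊆ V \ t := by
  rcases mem_indStar.mp hx with ⟨hxT, hd⟩ | ⟨s, hs, -, rfl⟩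
  · exact Finset.subset_sdiff.mpr ⟨hT x hxT, hd⟩
  · exact Finset.sdiff_subset_sdiff (hT s hs) le_rfl

def IsGraphImage (f : ℕ → ℕ) (G H : FinGraph) : Prop :=
  H.verts = G.verts.image f ∧ ∀ a ∈ G.verts, ∀ b ∈ G.verts, H.Adj (f a) (f b) ↔ G.Adj a b

theorem isGraphImage_relabelG (G : FinGraph) : IsGraphImage (rk G.verts) G (relabelG G) := by
  refine ⟨rfl, fun a ha b hb => ⟨?_, fun h => ?_⟩⟩
  · rintro ⟨-, v, w, hvw, hv, hw⟩
    obtain ⟨hvG, hwG⟩ := G.support v w hvw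
    rwa [(rk_strictMonoOn G.verts).injOn ha hvG hv, (rk_strictMonoOn G.verts).injOn hb hwG hw]
  · refine ⟨fun hab => G.loopless a ?_, a, b, h, rfl, rfl⟩
    rwa [(rk_strictMonoOn G.verts).injOn ha hb hab] at h ⊢

namespace IsGraphImage

variable {f g : ℕ → ℕ} {G H L : FinGraph}

theorem comp (hf : IsGraphImage f G H) (hg : IsGraphImage g H L) :
    IsGraphImage (g ∘ f) G L := by
  refine ⟨by rw [hg.1, hf.1, Finset.image_image], fun a ha b hb => ?_⟩
  have hmem : ∀ x ∈ G.verts, f x ∈ H.verts := fun x hx => hf.1 ▸ Finset.mem_image_of_mem f hx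
  exact (hg.2 _ (hmem a ha) _ (hmem b hb)).trans (hf.2 a ha b hb)

theorem unique {H₁ H₂ : FinGraph} (hf : IsGraphImage f G H₁) (hg : IsGraphImage g G H₂)
    (hfg : Set.EqOn f g G.verts) : H₁ = H₂ := by
  have hv : H₁.verts = H₂.verts := by rw [hf.1, hg.1]; exact Finset.image_congr hfg
  refine FinGraph.ext hv fun v w => ?_
  constructor
  · intro h
    obtain ⟨hv₁, hw₁⟩ := H₁.support v w h
    obtain ⟨a, ha, rfl⟩ := Finset.mem_image.mp (hf.1 ▸ hv₁)
    obtain ⟨b, hb, rfl⟩ := Finset.mem_image.mp (hf.1 ▸ hw₁)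
    rw [hfg ha, hfg hb, hg.2 a ha b hb, ← hf.2 a ha b hb]
    exact h
  · intro h
    obtain ⟨hv₂, hw₂⟩ := H₂.support v w h
    obtain ⟨a, ha, rfl⟩ := Finset.mem_image.mp (hg.1 ▸ hv₂)
    obtain ⟨b, hb, rfl⟩ := Finset.mem_image.mp (hg.1 ▸ hw₂)
    rw [← hfg ha, ← hfg hb, hf.2 a ha b hb, ← hg.2 a ha b hb]
    exact h

theorem induce (h : IsGraphImage f G H) {t : Finset ℕ} (ht : t ⊆ G.verts) :
    IsGraphImage f (CDTub.induce G t) (CDTub.induce H (t.image f)) := by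
  refine ⟨rfl, fun a (ha : a ∈ t) b (hb : b ∈ t) => ?_⟩
  have hmem : ∀ x ∈ t, f x ∈ t.image f := fun x hx => Finset.mem_image_of_mem f hx
  simp only [CDTub.induce, hmem a ha, hmem b hb, h.2 a (ht ha) b (ht hb), ha, hb, true_and]

theorem reconn (h : IsGraphImage f G H) (hf : Set.InjOn f G.verts) {t : Finset ℕ}
    (ht : t ⊆ G.verts) : IsGraphImage f (CDTub.reconn G t) (CDTub.reconn H (t.image f)) := by
  have hverts : H.verts \ t.image f = (G.verts \ t).image f := by
    rw [h.1, Finset.image_sdiff_of_injOn hf ht]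
  refine ⟨by rw [reconn_verts, reconn_verts, hverts], fun a ha b hb => ?_⟩
  rw [reconn_verts] at ha hb
  have hsd : ∀ x ∈ G.verts \ t, f x ∈ H.verts \ t.image f :=
    fun x hx => hverts ▸ Finset.mem_image_of_mem f hx
  have hV : ∀ x ∈ G.verts \ t, x ∈ G.verts := fun x hx => (Finset.mem_sdiff.mp hx).1
  have hnbr : ∀ x ∈ G.verts \ t, (∃ u ∈ t.image f, H.Adj (f x) u) ↔ ∃ u ∈ t, G.Adj x u := by
    intro x hx
    simp only [Finset.mem_image, exists_exists_and_eq_and]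
    exact exists_congr fun u => and_congr_right fun hu => h.2 x (hV x hx) u (ht hu)
  rw [reconn_adj, reconn_adj, hf.ne_iff (hV a ha) (hV b hb), hnbr a ha, hnbr b hb,
    h.2 a (hV a ha) b (hV b hb)]
  simp only [hsd a ha, hsd b hb, ha, hb, true_and]

theorem embPair_eq (h : IsGraphImage f G H) (hf : StrictMonoOn f G.verts)
    {T : Finset (Finset ℕ)} (hT : ∀ t ∈ T, t ⊆ G.verts) :
    embPair H (T.image (Finset.image f)) = embPair G T := by
  have hrk : ∀ v ∈ G.verts, rk H.verts (f v) = rk G.verts v := fun v hv => h.1 ▸ rk_image hf hv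
  unfold embPair
  by_cases hG : G.verts = ∅
  · rw [if_pos hG, if_pos (by rw [h.1, hG, Finset.image_empty])]
  rw [if_neg hG, if_neg (by rwa [h.1, Finset.image_eq_empty])]
  congr 2
  · exact (h.comp (isGraphImage_relabelG H)).unique (isGraphImage_relabelG G) hrk
  · rw [relabelT, relabelT, Finset.image_image]
    refine Finset.image_congr fun t ht => ?_
    rw [Function.comp_apply, relabelF, relabelF, Finset.image_image]
    exact Finset.image_congr fun v hv => hrk v (hT t ht hv)

end IsGraphImage

section Coproduct

variable (K : Type) [CommRing K]

def tubVec (G : FinGraph) (T : Finset (Finset ℕ)) : TubIdx →₀ K :=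
  Finsupp.single (embPair G T) 1

def unitVec : TubIdx →₀ K := Finsupp.single none 1

theorem delta_single (i : TubIdx) : delta K (Finsupp.single i 1) = deltaFun K i := by
  rw [delta, Finsupp.lift_apply, Finsupp.sum_single_index (by simp), one_smul]

theorem delta_unitVec : delta K (unitVec K) = unitVec K ⊗ₜ[K] unitVec K :=
  delta_single K none

theorem tubVec_of_verts_eq_empty {G : FinGraph} (hG : G.verts = ∅) (T : Finset (Finset ℕ)) :
    tubVec K G T = unitVec K := by
  rw [tubVec, embPair, if_pos hG, unitVec]

theorem delta_tubVec {G : FinGraph} {T : Finset (Finset ℕ)}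
    (hT : ∀ t ∈ T, t.Nonempty ∧ t ⊆ G.verts) :
    delta K (tubVec K G T) =
      ∑ t ∈ T, tubVec K (induce G t) (restrictT T t) ⊗ₜ[K] tubVec K (reconn G t) (indStar T t)
        + unitVec K ⊗ₜ[K] tubVec K G T := by
  by_cases hG : G.verts = ∅
  · have hT₀ : T = ∅ := Finset.eq_empty_of_forall_notMem fun t ht => by
      obtain ⟨⟨v, hv⟩, htG⟩ := hT t ht
      simpa [hG] using htG hv
    rw [hT₀, Finset.sum_empty, zero_add, tubVec_of_verts_eq_empty K hG, delta_unitVec]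
  have hemb : embPair G T = some (relabelG G, relabelT G.verts T) := if_neg hG
  have hf := rk_strictMonoOn G.verts
  have himage := isGraphImage_relabelG G
  rw [tubVec, delta_single, hemb]
  refine congrArg₂ (· + ·) ?_ (by rw [← hemb]; rfl)
  rw [show relabelT G.verts T = T.image (Finset.image (rk G.verts)) from rfl,
    Finset.sum_image fun s hs s' hs' =>
      (Finset.image_eq_image_iff_of_injOn hf.injOn (hT s hs).2 (hT s' hs').2).mp]
  refine Finset.sum_congr rfl fun t ht => ?_
  have hsub : ∀ s ∈ T, s ⊆ G.verts := fun s hs => (hT s hs).2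
  have htG := hsub t ht
  rw [restrictT_image hf.injOn hsub htG, indStar_image hf.injOn hsub htG,
    (himage.induce htG).embPair_eq (hf.mono htG) (T := restrictT T t)
      fun s hs => (mem_restrictT.mp hs).2,
    (himage.reconn hf.injOn htG).embPair_eq
      (hf.mono (by simp [reconn_verts]))
      (T := indStar T t) fun s hs => reconn_verts G t ▸ subset_sdiff_of_mem_indStar hsub hs]
  rfl

end Coproduct

section Tubings

variable {G : FinGraph} {T : Finset (Finset ℕ)} {s t ρ σ : Finset ℕ}

theorem FarApart.symm (h : FarApart G s t) : FarApart G t s :=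
  ⟨h.1.symm, fun ⟨v, hv, w, hw, hvw⟩ => h.2 ⟨w, hw, v, hv, G.symm _ _ hvw⟩⟩

theorem VConn.exists_adj_of_ssubset (hconn : VConn G ρ) (htρ : t ⊂ ρ) (ht : t.Nonempty) :
    ∃ b ∈ ρ \ t, ∃ a ∈ t, G.Adj b a := by
  obtain ⟨v, hv⟩ := ht
  obtain ⟨w, hw⟩ := Finset.sdiff_nonempty.mpr htρ.2
  suffices ∀ x, Relation.ReflTransGen (fun a b => a ∈ ρ ∧ b ∈ ρ ∧ G.Adj a b) x v →
      x ∈ ρ \ t → ∃ b ∈ ρ \ t, ∃ a ∈ t, G.Adj b a from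
    this w (hconn w (Finset.mem_sdiff.mp hw).1 v (htρ.subset hv)) hw
  intro x hx
  induction hx using Relation.ReflTransGen.head_induction_on with
  | refl => exact fun h => absurd hv (Finset.mem_sdiff.mp h).2
  | @head a c hac _ ih =>
    intro ha
    by_cases hc : c ∈ t
    · exact ⟨a, ha, c, hc, hac.2.2⟩
    · exact ih (Finset.mem_sdiff.mpr ⟨hac.2.1, hc⟩)

theorem VConn.not_farApart (hconn : VConn G (s ∪ t)) (hs : s.Nonempty) (ht : t.Nonempty) :
    ¬ FarApart G s t := by
  intro hfar
  obtain ⟨w, hw⟩ := ht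
  have hsub : s ⊂ s ∪ t := Finset.ssubset_iff.mpr ⟨w, Finset.disjoint_right.mp hfar.1 hw,
    Finset.insert_subset (Finset.mem_union_right s hw) Finset.subset_union_left⟩
  obtain ⟨b, hb, a, ha, hba⟩ := hconn.exists_adj_of_ssubset hsub hs
  obtain ⟨hbst, hbs⟩ := Finset.mem_sdiff.mp hb
  exact hfar.2 ⟨a, ha, b, (Finset.mem_union.mp hbst).resolve_left hbs, G.symm _ _ hba⟩

namespace IsTubing

theorem subset_verts (hT : IsTubing G T) (hs : s ∈ T) : s ⊆ G.verts := (hT.2.1 s hs).2.1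

theorem nonempty (hT : IsTubing G T) (hs : s ∈ T) : s.Nonempty := (hT.2.1 s hs).1

theorem subset_or_subset (hT : IsTubing G T) (hs : s ∈ T) (ht : t ∈ T) (h : ¬ Disjoint s t) :
    s ⊆ t ∨ t ⊆ s := by
  by_cases hst : s = t
  · exact Or.inl hst.le
  rcases hT.2.2 s hs t ht hst with h' | h' | h'
  exacts [Or.inl h', Or.inr h', absurd h'.1 h]

theorem farApart_of_disjoint (hT : IsTubing G T) (hs : s ∈ T) (ht : t ∈ T) (h : Disjoint s t) :
    FarApart G s t := by
  have hst : s ≠ t := fun hst => (hT.nonempty hs).ne_empty (h.eq_bot_of_le hst.le)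
  rcases hT.2.2 s hs t ht hst with h' | h' | h'
  exacts [absurd (h.eq_bot_of_le h') (hT.nonempty hs).ne_empty,
    absurd (h.symm.eq_bot_of_le h') (hT.nonempty ht).ne_empty, h']

end IsTubing

theorem induce_induce (h : s ⊆ t) : induce (induce G t) s = induce G s :=
  FinGraph.ext rfl fun v w => by
    simp only [induce]
    constructor
    · rintro ⟨hv, hw, -, -, hvw⟩; exact ⟨hv, hw, hvw⟩
    · rintro ⟨hv, hw, hvw⟩; exact ⟨hv, hw, h hv, h hw, hvw⟩

theorem restrictT_restrictT (h : s ⊆ t) : restrictT (restrictT T t) s = restrictT T s := by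
  ext x
  simp only [mem_restrictT, and_assoc]
  exact and_congr_right fun _ => ⟨fun h' => h'.2, fun h' => ⟨h'.trans h, h'⟩⟩

theorem reconn_adj_of_mem {v w : ℕ} (hv : v ∈ G.verts \ t) (hw : w ∈ G.verts \ t) (hvw : v ≠ w) :
    (reconn G t).Adj v w ↔ G.Adj v w ∨ (∃ u ∈ t, G.Adj v u) ∧ ∃ u ∈ t, G.Adj w u := by
  simp only [reconn_adj, hv, hw, hvw, ne_eq, not_false_eq_true, true_and]

theorem induce_reconn (htρ : t ⊆ ρ) (hρ : ρ ⊆ G.verts) :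
    induce (reconn G t) (ρ \ t) = reconn (induce G ρ) t := by
  refine FinGraph.ext (by rw [reconn_verts]; rfl) fun v w => ?_
  simp only [induce, reconn_adj, Finset.mem_sdiff]
  constructor
  · rintro ⟨⟨hvρ, hvt⟩, ⟨hwρ, hwt⟩, hvw, -, -, h⟩
    refine ⟨hvw, ⟨hvρ, hvt⟩, ⟨hwρ, hwt⟩, ?_⟩
    rcases h with h | ⟨⟨u, hu, hvu⟩, ⟨u', hu', hwu⟩⟩
    · exact Or.inl ⟨hvρ, hwρ, h⟩
    · exact Or.inr ⟨⟨u, hu, hvρ, htρ hu, hvu⟩, ⟨u', hu', hwρ, htρ hu', hwu⟩⟩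
  · rintro ⟨hvw, ⟨hvρ, hvt⟩, ⟨hwρ, hwt⟩, h⟩
    refine ⟨⟨hvρ, hvt⟩, ⟨hwρ, hwt⟩, hvw, ⟨hρ hvρ, hvt⟩, ⟨hρ hwρ, hwt⟩, ?_⟩
    rcases h with ⟨-, -, h⟩ | ⟨⟨u, hu, -, -, hvu⟩, ⟨u', hu', -, -, hwu⟩⟩
    · exact Or.inl h
    · exact Or.inr ⟨⟨u, hu, hvu⟩, ⟨u', hu', hwu⟩⟩

theorem restrictT_indStar (htρ : t ⊆ ρ) :
    restrictT (indStar T t) (ρ \ t) = indStar (restrictT T ρ) t := by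
  ext x
  simp only [mem_restrictT, mem_indStar]
  constructor
  · rintro ⟨⟨hxT, hd⟩ | ⟨σ, hσ, htσ, rfl⟩, hsub⟩
    · exact Or.inl ⟨⟨hxT, (Finset.subset_sdiff.mp hsub).1⟩, hd⟩
    · refine Or.inr ⟨σ, ⟨hσ, ?_⟩, htσ, rfl⟩
      rw [← Finset.sdiff_union_of_subset htσ.subset]
      exact Finset.union_subset (hsub.trans Finset.sdiff_subset) htρ
  · rintro (⟨⟨hxT, hxρ⟩, hd⟩ | ⟨σ, ⟨hσ, hσρ⟩, htσ, rfl⟩)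
    · exact ⟨Or.inl ⟨hxT, hd⟩, Finset.subset_sdiff.mpr ⟨hxρ, hd⟩⟩
    · exact ⟨Or.inr ⟨σ, hσ, htσ, rfl⟩, Finset.sdiff_subset_sdiff hσρ le_rfl⟩

theorem exists_reconn_adj_iff (hρ : ρ ⊆ G.verts) (htρ : t ⊂ ρ) (hconn : VConn G ρ)
    (ht : t.Nonempty) {x : ℕ} (hx : x ∈ G.verts \ ρ) :
    (∃ u ∈ ρ \ t, (reconn G t).Adj x u) ↔ ∃ u ∈ ρ, G.Adj x u := by
  obtain ⟨hxV, hxρ⟩ := Finset.mem_sdiff.mp hx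
  have hxt : x ∈ G.verts \ t := Finset.mem_sdiff.mpr ⟨hxV, fun h => hxρ (htρ.subset h)⟩
  have hadj : ∀ u ∈ ρ \ t, ((reconn G t).Adj x u ↔
      G.Adj x u ∨ (∃ a ∈ t, G.Adj x a) ∧ ∃ a ∈ t, G.Adj u a) := fun u hu =>
    reconn_adj_of_mem hxt (Finset.sdiff_subset_sdiff hρ le_rfl hu)
      fun h => hxρ (h ▸ (Finset.mem_sdiff.mp hu).1)
  constructor
  · rintro ⟨u, hu, h⟩
    rcases (hadj u hu).mp h with h | ⟨⟨a, ha, h⟩, -⟩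
    exacts [⟨u, (Finset.mem_sdiff.mp hu).1, h⟩, ⟨a, htρ.subset ha, h⟩]
  · rintro ⟨u, hu, h⟩
    by_cases hut : u ∈ t
    · -- reconnect through `t` to a vertex of `ρ \ t` adjacent to `t`
      obtain ⟨b, hb, a, ha, hba⟩ := hconn.exists_adj_of_ssubset htρ ht
      exact ⟨b, hb, (hadj b hb).mpr (Or.inr ⟨⟨u, hut, h⟩, a, ha, hba⟩)⟩
    · have hu' : u ∈ ρ \ t := Finset.mem_sdiff.mpr ⟨hu, hut⟩
      exact ⟨u, hu', (hadj u hu').mpr (Or.inl h)⟩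

theorem reconn_reconn (hρ : ρ ⊆ G.verts) (htρ : t ⊂ ρ) (hconn : VConn G ρ) (ht : t.Nonempty) :
    reconn (reconn G t) (ρ \ t) = reconn G ρ := by
  have hverts : (G.verts \ t) \ (ρ \ t) = G.verts \ ρ :=
    sdiff_sdiff_sdiff_cancel_right htρ.subset
  refine FinGraph.ext (by rw [reconn_verts, reconn_verts, reconn_verts, hverts]) fun v w => ?_
  rw [reconn_adj (reconn G t), reconn_adj G ρ, reconn_verts, hverts]
  refine and_congr_right fun hvw => and_congr_right fun hv => and_congr_right fun hw => ?_
  have hsub : G.verts \ ρ ⊆ G.verts \ t := Finset.sdiff_subset_sdiff le_rfl htρ.subset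
  rw [exists_reconn_adj_iff hρ htρ hconn ht hv, exists_reconn_adj_iff hρ htρ hconn ht hw,
    reconn_adj_of_mem (hsub hv) (hsub hw) hvw]
  have hN : ∀ x, (∃ u ∈ t, G.Adj x u) → ∃ u ∈ ρ, G.Adj x u :=
    fun x ⟨u, hu, h⟩ => ⟨u, htρ.subset hu, h⟩
  constructor
  · rintro ((h | ⟨h₁, h₂⟩) | h)
    exacts [Or.inl h, Or.inr ⟨hN v h₁, hN w h₂⟩, Or.inr h]
  · rintro (h | h)
    exacts [Or.inl (Or.inl h), Or.inr h]

theorem ssubset_of_sdiff_ssubset_sdiff (htρ : t ⊆ ρ) (htσ : t ⊆ σ) (h : ρ \ t ⊂ σ \ t) :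
    ρ ⊂ σ := by
  refine Finset.ssubset_def.mpr ⟨?_, fun hσρ => h.2 (Finset.sdiff_subset_sdiff hσρ le_rfl)⟩
  rw [← Finset.sdiff_union_of_subset htρ]
  exact Finset.union_subset (h.subset.trans Finset.sdiff_subset) htσ

theorem indStar_indStar (hT : IsTubing G T) (ht : t ∈ T) (hρ : ρ ∈ T) (htρ : t ⊂ ρ) :
    indStar (indStar T t) (ρ \ t) = indStar T ρ := by
  have hsdiff : ∀ {a}, t ⊂ a → (a \ t).Nonempty := fun h => Finset.sdiff_nonempty.mpr h.2
  have hnotdisj : ∀ {a}, t ⊆ a → ¬ Disjoint a ρ := fun h hd =>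
    (hT.nonempty ht).ne_empty ((hd.mono h htρ.subset).eq_bot_of_le le_rfl)
  ext x
  rw [mem_indStar, @mem_indStar T ρ]
  constructor
  · rintro (⟨hx, hd⟩ | ⟨y, hy, hρy, rfl⟩)
    · rcases mem_indStar.mp hx with ⟨hxT, hxt⟩ | ⟨σ, hσ, htσ, rfl⟩
      · refine Or.inl ⟨hxT, ?_⟩
        rw [← Finset.sdiff_union_of_subset htρ.subset, Finset.disjoint_union_right]
        exact ⟨hd, hxt⟩
      · exfalso
        rcases hT.subset_or_subset hσ hρ (hnotdisj htσ.subset) with h | h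
        · exact (hsdiff htσ).ne_empty (hd.eq_bot_of_le (Finset.sdiff_subset_sdiff h le_rfl))
        · exact (hsdiff htρ).ne_empty (hd.symm.eq_bot_of_le (Finset.sdiff_subset_sdiff h le_rfl))
    · rcases mem_indStar.mp hy with ⟨hyT, hyt⟩ | ⟨σ, hσ, htσ, rfl⟩
      · exfalso
        have hy_ne : ¬ Disjoint y ρ := fun hd => (hsdiff htρ).ne_empty
          ((hd.mono hρy.subset Finset.sdiff_subset).eq_bot_of_le le_rfl)
        rcases hT.subset_or_subset hyT hρ hy_ne with h | h
        · exact (Finset.ssubset_def.mp hρy).2 (Finset.subset_sdiff.mpr ⟨h, hyt⟩)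
        · exact (hT.nonempty ht).ne_empty (hyt.symm.eq_bot_of_le (htρ.subset.trans h))
      · exact Or.inr ⟨σ, hσ, ssubset_of_sdiff_ssubset_sdiff htρ.subset htσ.subset hρy,
          (sdiff_sdiff_sdiff_cancel_right htρ.subset).symm⟩
  · rintro (⟨hxT, hxρ⟩ | ⟨σ, hσ, hρσ, rfl⟩)
    · exact Or.inl ⟨mem_indStar.mpr (Or.inl ⟨hxT, hxρ.mono_right htρ.subset⟩),
        hxρ.mono_right Finset.sdiff_subset⟩
    · exact Or.inr ⟨σ \ t, mem_indStar.mpr (Or.inr ⟨σ, hσ, htρ.trans hρσ, rfl⟩),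
        sdiff_lt_sdiff_right hρσ htρ.subset, sdiff_sdiff_sdiff_cancel_right htρ.subset⟩

theorem induce_reconn_of_farApart (hfar : FarApart G t ρ) (hρ : ρ ⊆ G.verts) :
    induce (reconn G t) ρ = induce G ρ := by
  refine FinGraph.ext rfl fun v w => ?_
  simp only [induce]
  refine and_congr_right fun hv => and_congr_right fun hw => ?_
  have hmem : ∀ x ∈ ρ, x ∈ G.verts \ t :=
    fun x hx => Finset.mem_sdiff.mpr ⟨hρ hx, Finset.disjoint_right.mp hfar.1 hx⟩
  by_cases hvw : v = w
  · subst hvw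
    exact iff_of_false ((reconn G t).loopless v) (G.loopless v)
  rw [reconn_adj_of_mem (hmem v hv) (hmem w hw) hvw]
  exact or_iff_left fun ⟨⟨u, hu, hvu⟩, _⟩ => hfar.2 ⟨u, hu, v, hv, G.symm _ _ hvu⟩

theorem restrictT_indStar_of_farApart (hT : IsTubing G T) (ht : t ∈ T) (hρ : ρ ∈ T)
    (hfar : FarApart G t ρ) : restrictT (indStar T t) ρ = restrictT T ρ := by
  ext x
  simp only [mem_restrictT, mem_indStar]
  constructor
  · rintro ⟨⟨hxT, -⟩ | ⟨σ, hσ, htσ, rfl⟩, hsub⟩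
    · exact ⟨hxT, hsub⟩
    · exfalso
      have hσρ : ¬ Disjoint σ ρ := fun hd => (Finset.sdiff_nonempty.mpr htσ.2).ne_empty
        ((hd.mono Finset.sdiff_subset hsub).eq_bot_of_le le_rfl)
      rcases hT.subset_or_subset hσ hρ hσρ with h | h
      · exact (hT.nonempty ht).ne_empty (hfar.1.eq_bot_of_le (htσ.subset.trans h))
      · -- then `σ = t ∪ ρ`, which is disconnected
        have hσ_eq : σ = t ∪ ρ := by
          refine le_antisymm ?_ (Finset.union_subset htσ.subset h)
          rw [← Finset.sdiff_union_of_subset htσ.subset, Finset.union_comm]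
          exact Finset.union_subset_union le_rfl hsub
        exact (hσ_eq ▸ (hT.2.1 σ hσ).2.2 : VConn G (t ∪ ρ)).not_farApart
          (hT.nonempty ht) (hT.nonempty hρ) hfar
  · rintro ⟨hxT, hsub⟩
    exact ⟨Or.inl ⟨hxT, Finset.disjoint_of_subset_left hsub hfar.1.symm⟩, hsub⟩

theorem reconn_reconn_adj_of_farApart (hfar : FarApart G t ρ) (hρ : ρ ⊆ G.verts) (v w : ℕ) :
    (reconn (reconn G t) ρ).Adj v w ↔ v ≠ w ∧ v ∈ (G.verts \ t) \ ρ ∧ w ∈ (G.verts \ t) \ ρ ∧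
      ((G.Adj v w ∨ (∃ u ∈ t, G.Adj v u) ∧ ∃ u ∈ t, G.Adj w u) ∨
        (∃ u ∈ ρ, G.Adj v u) ∧ ∃ u ∈ ρ, G.Adj w u) := by
  rw [reconn_adj (reconn G t), reconn_verts]
  refine and_congr_right fun hvw => and_congr_right fun hv => and_congr_right fun hw => ?_
  have hsub : (G.verts \ t) \ ρ ⊆ G.verts \ t := Finset.sdiff_subset
  have hnbr : ∀ x ∈ (G.verts \ t) \ ρ,
      (∃ u ∈ ρ, (reconn G t).Adj x u) ↔ ∃ u ∈ ρ, G.Adj x u := by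
    intro x hx
    refine exists_congr fun u => and_congr_right fun hu => ?_
    have hu' : u ∈ G.verts \ t := Finset.mem_sdiff.mpr ⟨hρ hu, Finset.disjoint_right.mp hfar.1 hu⟩
    rw [reconn_adj_of_mem (hsub hx) hu' fun h => (Finset.mem_sdiff.mp hx).2 (h ▸ hu)]
    exact or_iff_left fun ⟨_, ⟨a, ha, hua⟩⟩ => hfar.2 ⟨a, ha, u, hu, G.symm _ _ hua⟩
  rw [reconn_adj_of_mem (hsub hv) (hsub hw) hvw, hnbr v hv, hnbr w hw]

theorem reconn_reconn_comm_of_farApart (hfar : FarApart G t ρ) (ht : t ⊆ G.verts)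
    (hρ : ρ ⊆ G.verts) : reconn (reconn G t) ρ = reconn (reconn G ρ) t := by
  refine FinGraph.ext (by simp only [reconn_verts, sdiff_sdiff_comm]) fun v w => ?_
  rw [reconn_reconn_adj_of_farApart hfar hρ, reconn_reconn_adj_of_farApart hfar.symm ht,
    sdiff_sdiff_comm, or_right_comm]

theorem indStar_indStar_subset_of_disjoint (hd : Disjoint t ρ) :
    indStar (indStar T t) ρ ⊆ indStar (indStar T ρ) t := by
  intro x hx
  rcases mem_indStar.mp hx with ⟨hx', hxρ⟩ | ⟨s, hs, hρs, rfl⟩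
  · rcases mem_indStar.mp hx' with ⟨hxT, hxt⟩ | ⟨σ, hσ, htσ, rfl⟩
    · exact mem_indStar.mpr (Or.inl ⟨mem_indStar.mpr (Or.inl ⟨hxT, hxρ⟩), hxt⟩)
    · have hσρ : Disjoint σ ρ := by
        rw [← Finset.sdiff_union_of_subset htσ.subset, Finset.disjoint_union_left]
        exact ⟨hxρ, hd⟩
      exact mem_indStar.mpr (Or.inr ⟨σ, mem_indStar.mpr (Or.inl ⟨hσ, hσρ⟩), htσ, rfl⟩)
  · rcases mem_indStar.mp hs with ⟨hsT, hst⟩ | ⟨σ, hσ, htσ, rfl⟩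
    · exact mem_indStar.mpr (Or.inl ⟨mem_indStar.mpr (Or.inr ⟨s, hsT, hρs, rfl⟩),
        Finset.disjoint_of_subset_left Finset.sdiff_subset hst⟩)
    · obtain ⟨b, hb⟩ := Finset.sdiff_nonempty.mpr hρs.2
      simp only [Finset.mem_sdiff] at hb
      have hρσ : ρ ⊂ σ := Finset.ssubset_iff.mpr ⟨b, hb.2, Finset.insert_subset hb.1.1
        (hρs.subset.trans Finset.sdiff_subset)⟩
      have htσρ : t ⊂ σ \ ρ := Finset.ssubset_iff.mpr ⟨b, hb.1.2, Finset.insert_subset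
        (Finset.mem_sdiff.mpr ⟨hb.1.1, hb.2⟩) (Finset.subset_sdiff.mpr ⟨htσ.subset, hd⟩)⟩
      exact mem_indStar.mpr (Or.inr ⟨σ \ ρ, mem_indStar.mpr (Or.inr ⟨σ, hσ, hρσ, rfl⟩), htσρ,
        sdiff_sdiff_comm⟩)

theorem indStar_indStar_comm_of_disjoint (hd : Disjoint t ρ) :
    indStar (indStar T t) ρ = indStar (indStar T ρ) t :=
  (indStar_indStar_subset_of_disjoint hd).antisymm (indStar_indStar_subset_of_disjoint hd.symm)

theorem IsTubing.nonempty_of_mem_indStar (hT : IsTubing G T) {x : Finset ℕ}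
    (hx : x ∈ indStar T t) : x.Nonempty := by
  rcases mem_indStar.mp hx with ⟨hxT, -⟩ | ⟨s, -, hts, rfl⟩
  exacts [hT.nonempty hxT, Finset.sdiff_nonempty.mpr hts.2]

theorem IsTubing.sum_indStar {M : Type*} [AddCommMonoid M] (hT : IsTubing G T) (ht : t ∈ T)
    (f : Finset ℕ → M) :
    ∑ x ∈ indStar T t, f x =
      ∑ σ ∈ T with Disjoint σ t, f σ + ∑ ρ ∈ T with t ⊂ ρ, f (ρ \ t) := by
  rw [indStar, Finset.sum_union, Finset.sum_image]
  · intro ρ hρ ρ' hρ' (h : ρ \ t = ρ' \ t)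
    rw [← Finset.sdiff_union_of_subset (Finset.mem_filter.mp hρ).2.subset, h,
      Finset.sdiff_union_of_subset (Finset.mem_filter.mp hρ').2.subset]
  · -- a tube far apart from `t` cannot be `ρ \ t`: `ρ` would be disconnected
    refine Finset.disjoint_left.mpr fun σ hσ hσ' => ?_
    obtain ⟨hσT, hσt⟩ := Finset.mem_filter.mp hσ
    obtain ⟨ρ, hρ, rfl⟩ := Finset.mem_image.mp hσ'
    obtain ⟨hρT, htρ⟩ := Finset.mem_filter.mp hρ
    have hconn : VConn G ((ρ \ t) ∪ t) := by
      rw [Finset.sdiff_union_of_subset htρ.subset]; exact (hT.2.1 ρ hρT).2.2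
    exact hconn.not_farApart (hT.nonempty hσT) (hT.nonempty ht)
      (hT.farApart_of_disjoint hσT ht hσt)

end Tubings

section Expansion

variable (K : Type) [CommRing K] (G : FinGraph) (T : Finset (Finset ℕ))

/-- `(Γ_t, T|_t)` -/
def restrVec (t : Finset ℕ) : TubIdx →₀ K := tubVec K (induce G t) (restrictT T t)

/-- `(Γ_t^*, T_t^*)` -/
def starVec (t : Finset ℕ) : TubIdx →₀ K := tubVec K (reconn G t) (indStar T t)

/-- `((Γ_t)_σ^*, (T|_t)_σ^*)` -/
def restrStarVec (σ t : Finset ℕ) : TubIdx →₀ K :=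
  tubVec K (reconn (induce G t) σ) (indStar (restrictT T t) σ)

/-- `((Γ_t^*)_σ^*, (T_t^*)_σ^*)` -/
def starStarVec (t σ : Finset ℕ) : TubIdx →₀ K :=
  tubVec K (reconn (reconn G t) σ) (indStar (indStar T t) σ)

theorem delta_single_some :
    delta K (Finsupp.single (some (G, T)) 1) =
      ∑ t ∈ T, restrVec K G T t ⊗ₜ[K] starVec K G T t
        + unitVec K ⊗ₜ[K] Finsupp.single (some (G, T)) 1 :=
  delta_single K _

variable {K G T}

theorem delta_restrVec (hT : IsTubing G T) {t : Finset ℕ} :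
    delta K (restrVec K G T t) =
      ∑ σ ∈ restrictT T t, restrVec K G T σ ⊗ₜ[K] restrStarVec K G T σ t
        + unitVec K ⊗ₜ[K] restrVec K G T t := by
  rw [restrVec, delta_tubVec K (G := induce G t) (T := restrictT T t) fun σ hσ =>
    ⟨hT.nonempty (mem_restrictT.mp hσ).1, (mem_restrictT.mp hσ).2⟩]
  refine congrArg (· + _) (Finset.sum_congr rfl fun σ hσ => ?_)
  rw [induce_induce (mem_restrictT.mp hσ).2, restrictT_restrictT (mem_restrictT.mp hσ).2]
  rfl

theorem delta_starVec (hT : IsTubing G T) {t : Finset ℕ} (ht : t ∈ T) :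
    delta K (starVec K G T t) =
      ∑ σ ∈ T with Disjoint σ t, restrVec K G T σ ⊗ₜ[K] starStarVec K G T t σ
        + ∑ ρ ∈ T with t ⊆ ρ, restrStarVec K G T t ρ ⊗ₜ[K] starVec K G T ρ := by
  have hsub : ∀ s ∈ T, s ⊆ G.verts := fun s hs => hT.subset_verts hs
  rw [starVec, delta_tubVec K fun x hx => ⟨hT.nonempty_of_mem_indStar hx,
    reconn_verts G t ▸ subset_sdiff_of_mem_indStar hsub hx⟩, hT.sum_indStar ht, add_assoc]
  have hsupsets : {ρ ∈ T | t ⊆ ρ} = insert t {ρ ∈ T | t ⊂ ρ} := by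
    ext ρ
    simp only [Finset.mem_insert, Finset.mem_filter, subset_iff_ssubset_or_eq]
    grind
  rw [hsupsets, Finset.sum_insert (by simp), add_comm (_ ⊗ₜ[K] _)]
  congr 1
  · refine Finset.sum_congr rfl fun σ hσ => ?_
    obtain ⟨hσT, hσt⟩ := Finset.mem_filter.mp hσ
    have hfar := (hT.farApart_of_disjoint hσT ht hσt).symm
    rw [induce_reconn_of_farApart hfar (hsub σ hσT),
      restrictT_indStar_of_farApart hT ht hσT hfar]
    rfl
  congr 1
  · refine Finset.sum_congr rfl fun ρ hρ => ?_
    obtain ⟨hρT, htρ⟩ := Finset.mem_filter.mp hρ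
    rw [induce_reconn htρ.subset (hsub ρ hρT), restrictT_indStar htρ.subset,
      reconn_reconn (hsub ρ hρT) htρ (hT.2.1 ρ hρT).2.2 (hT.nonempty ht),
      indStar_indStar hT ht hρT htρ]
    rfl
  · rw [restrStarVec, tubVec_of_verts_eq_empty K (G := reconn (induce G t) t)
      (by rw [reconn_verts]; exact Finset.sdiff_self t)]
    rfl

end Expansion

section PreLie

variable {K : Type} [CommRing K] {G : FinGraph} {T : Finset (Finset ℕ)}

theorem lTensor_delta_delta (hT : IsTubing G T) :
    LinearMap.lTensor (TubIdx →₀ K) (delta K) (delta K (Finsupp.single (some (G, T)) 1)) =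
      ∑ t ∈ T, ∑ σ ∈ T with Disjoint σ t,
          restrVec K G T t ⊗ₜ[K] (restrVec K G T σ ⊗ₜ[K] starStarVec K G T t σ)
        + ∑ t ∈ T, ∑ ρ ∈ T with t ⊆ ρ,
          restrVec K G T t ⊗ₜ[K] (restrStarVec K G T t ρ ⊗ₜ[K] starVec K G T ρ)
        + unitVec K ⊗ₜ[K] delta K (Finsupp.single (some (G, T)) 1) := by
  conv_lhs => rw [delta_single_some]
  rw [map_add, map_sum, LinearMap.lTensor_tmul, ← Finset.sum_add_distrib]
  refine congrArg (· + _) (Finset.sum_congr rfl fun t ht => ?_)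
  rw [LinearMap.lTensor_tmul, delta_starVec hT ht, TensorProduct.tmul_add,
    TensorProduct.tmul_sum, TensorProduct.tmul_sum]

theorem assoc_rTensor_delta_delta (hT : IsTubing G T) :
    TensorProduct.assoc K (TubIdx →₀ K) (TubIdx →₀ K) (TubIdx →₀ K)
        (LinearMap.rTensor (TubIdx →₀ K) (delta K) (delta K (Finsupp.single (some (G, T)) 1))) =
      ∑ ρ ∈ T, ∑ t ∈ restrictT T ρ,
          restrVec K G T t ⊗ₜ[K] (restrStarVec K G T t ρ ⊗ₜ[K] starVec K G T ρ)
        + unitVec K ⊗ₜ[K] delta K (Finsupp.single (some (G, T)) 1) := by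
  simp only [delta_single_some, map_add, map_sum, LinearMap.rTensor_tmul, delta_restrVec hT,
    delta_unitVec, TensorProduct.add_tmul, TensorProduct.sum_tmul, TensorProduct.assoc_tmul,
    TensorProduct.tmul_add, TensorProduct.tmul_sum, Finset.sum_add_distrib]
  abel

theorem associator_eq_sum_disjoint (hT : IsTubing G T) :
    LinearMap.lTensor (TubIdx →₀ K) (delta K) (delta K (Finsupp.single (some (G, T)) 1)) +
      (-1 : K) • TensorProduct.assoc K (TubIdx →₀ K) (TubIdx →₀ K) (TubIdx →₀ K)
        (LinearMap.rTensor (TubIdx →₀ K) (delta K) (delta K (Finsupp.single (some (G, T)) 1))) =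
      ∑ t ∈ T, ∑ σ ∈ T with Disjoint σ t,
        restrVec K G T t ⊗ₜ[K] (restrVec K G T σ ⊗ₜ[K] starStarVec K G T t σ) := by
  have hnested : ∑ t ∈ T, ∑ ρ ∈ T with t ⊆ ρ,
        restrVec K G T t ⊗ₜ[K] (restrStarVec K G T t ρ ⊗ₜ[K] starVec K G T ρ) =
      ∑ ρ ∈ T, ∑ t ∈ restrictT T ρ,
        restrVec K G T t ⊗ₜ[K] (restrStarVec K G T t ρ ⊗ₜ[K] starVec K G T ρ) :=
    Finset.sum_comm' fun t ρ => by simp only [Finset.mem_filter, mem_restrictT]; tauto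
  rw [lTensor_delta_delta hT, assoc_rTensor_delta_delta hT, hnested]
  module

theorem starStarVec_comm (hT : IsTubing G T) {s t : Finset ℕ} (hs : s ∈ T) (ht : t ∈ T)
    (hd : Disjoint s t) : starStarVec K G T s t = starStarVec K G T t s := by
  rw [starStarVec, starStarVec, reconn_reconn_comm_of_farApart (hT.farApart_of_disjoint hs ht hd)
    (hT.subset_verts hs) (hT.subset_verts ht), indStar_indStar_comm_of_disjoint hd]

theorem twist_sum_disjoint (hT : IsTubing G T) :
    ((TensorProduct.assoc K (TubIdx →₀ K) (TubIdx →₀ K) (TubIdx →₀ K)).toLinearMap ∘ₗ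
        LinearMap.rTensor (TubIdx →₀ K)
          (TensorProduct.comm K (TubIdx →₀ K) (TubIdx →₀ K)).toLinearMap ∘ₗ
        (TensorProduct.assoc K (TubIdx →₀ K) (TubIdx →₀ K) (TubIdx →₀ K)).symm.toLinearMap)
      (∑ t ∈ T, ∑ σ ∈ T with Disjoint σ t,
        restrVec K G T t ⊗ₜ[K] (restrVec K G T σ ⊗ₜ[K] starStarVec K G T t σ)) =
      ∑ t ∈ T, ∑ σ ∈ T with Disjoint σ t,
        restrVec K G T t ⊗ₜ[K] (restrVec K G T σ ⊗ₜ[K] starStarVec K G T t σ) := by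
  simp only [map_sum, LinearMap.comp_apply, LinearEquiv.coe_coe, TensorProduct.assoc_symm_tmul,
    LinearMap.rTensor_tmul, TensorProduct.comm_tmul, TensorProduct.assoc_tmul]
  rw [Finset.sum_comm' (t' := T) (s' := fun σ => {t ∈ T | Disjoint t σ})
    fun t σ => by simp only [Finset.mem_filter, disjoint_comm (a := σ)]; tauto]
  refine Finset.sum_congr rfl fun t ht => Finset.sum_congr rfl fun σ hσ => ?_
  obtain ⟨hσT, hσt⟩ := Finset.mem_filter.mp hσ
  rw [starStarVec_comm hT hσT ht hσt]

end PreLie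

end CDTub

open CDTub in
theorem delta_preLie_general (K : Type) [Field K] (G : FinGraph)
    (T : Finset (Finset ℕ)) (hT : IsTubing G T) :
    LinearMap.lTensor (TubIdx →₀ K) (delta K)
        (delta K (Finsupp.single (some (G, T)) 1)) +
      (-1 : K) • (TensorProduct.assoc K (TubIdx →₀ K) (TubIdx →₀ K) (TubIdx →₀ K))
        (LinearMap.rTensor (TubIdx →₀ K) (delta K)
          (delta K (Finsupp.single (some (G, T)) 1))) =
    ((TensorProduct.assoc K (TubIdx →₀ K) (TubIdx →₀ K) (TubIdx →₀ K)).toLinearMap ∘ₗ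
        LinearMap.rTensor (TubIdx →₀ K)
          (TensorProduct.comm K (TubIdx →₀ K) (TubIdx →₀ K)).toLinearMap ∘ₗ
        (TensorProduct.assoc K (TubIdx →₀ K) (TubIdx →₀ K) (TubIdx →₀ K)).symm.toLinearMap)
      (LinearMap.lTensor (TubIdx →₀ K) (delta K)
          (delta K (Finsupp.single (some (G, T)) 1)) +
        (-1 : K) • (TensorProduct.assoc K (TubIdx →₀ K) (TubIdx →₀ K) (TubIdx →₀ K))
          (LinearMap.rTensor (TubIdx →₀ K) (delta K)
            (delta K (Finsupp.single (some (G, T)) 1)))) := by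
  rw [associator_eq_sum_disjoint hT, twist_sum_disjoint hT]

open CDTub in
/-- The coproduct `Δ_•` is right pre-Lie: on every basis element `(Γ,T)` of `Tub`,
`(Id ⊗ Δ_• − Δ_• ⊗ Id) ∘ Δ_•` is symmetric in the first two tensor factors (the
associator and the twist `τ` are the canonical ones; the difference `a − b` is written
`a + (−1)•b`). -/
theorem delta_preLie (K : Type) [Field K] (G : FinGraph) (n : ℕ)
    (hV : G.verts = Finset.Icc 1 n) (hc : IsConnGraph G)
    (T : Finset (Finset ℕ)) (hT : IsTubing G T) :
    LinearMap.lTensor (TubIdx →₀ K) (delta K)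
        (delta K (Finsupp.single (some (G, T)) 1)) +
      (-1 : K) • (TensorProduct.assoc K (TubIdx →₀ K) (TubIdx →₀ K) (TubIdx →₀ K))
        (LinearMap.rTensor (TubIdx →₀ K) (delta K)
          (delta K (Finsupp.single (some (G, T)) 1))) =
    ((TensorProduct.assoc K (TubIdx →₀ K) (TubIdx →₀ K) (TubIdx →₀ K)).toLinearMap ∘ₗ
        LinearMap.rTensor (TubIdx →₀ K)
          (TensorProduct.comm K (TubIdx →₀ K) (TubIdx →₀ K)).toLinearMap ∘ₗ
        (TensorProduct.assoc K (TubIdx →₀ K) (TubIdx →₀ K) (TubIdx →₀ K)).symm.toLinearMap)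
      (LinearMap.lTensor (TubIdx →₀ K) (delta K)
          (delta K (Finsupp.single (some (G, T)) 1)) +
        (-1 : K) • (TensorProduct.assoc K (TubIdx →₀ K) (TubIdx →₀ K) (TubIdx →₀ K))
          (LinearMap.rTensor (TubIdx →₀ K) (delta K)
            (delta K (Finsupp.single (some (G, T)) 1)))) :=
  delta_preLie_general K G T hT
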